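/- arXiv:2505.04929 — 5 statements merged into one kernel-verified Lean document; each statement's English description precedes it below -/
import Mathlib

section
/- Let N ≥ k ≥ 2 be integers, and let p ≥ 2 be the unique integer with k·(p choose 2) ≤ N < k·((p+1) choose 2). Write N = k·(p choose 2) + q·p + r with integers q, r satisfying 0 ≤ q < k and 0 ≤ r < p. Then M^L(k,N) = k·p − k + q if r ≤ (p−1)/2, and M^L(k,N) = k·p − k + q + 1 − 2(p−r)/(p+1) if r ≥ (p−1)/2. -/
/-- Number of edges of a finite simple graph. -/
noncomputable def edgeCnt {V : Type} [Fintype V] (G : SimpleGraph V) : ℕ :=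
  G.edgeSet.ncard

/-- Number of edges of `G` with both endpoints in `X`. -/
noncomputable def inducedEdgeCnt {V : Type} [Fintype V] (G : SimpleGraph V) (X : Finset V) : ℕ :=
  {e : Sym2 V | e ∈ G.edgeSet ∧ ∀ v ∈ e, v ∈ X}.ncard

/-- Maximum average degree of a finite simple graph. -/
noncomputable def Mad {V : Type} [Fintype V] (G : SimpleGraph V) : ℝ :=
  sSup {d : ℝ | ∃ X : Finset V, X.Nonempty ∧ d = 2 * (inducedEdgeCnt G X : ℝ) / (X.card : ℝ)}

/-- A `k`-decomposition of the complete graph `K_n`. -/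
def IsKDecomp {k n : ℕ} (G : Fin k → SimpleGraph (Fin n)) : Prop :=
  (∀ i j, i ≠ j → Disjoint (G i).edgeSet (G j).edgeSet) ∧
  (⋃ i, (G i).edgeSet) = (⊤ : SimpleGraph (Fin n)).edgeSet

/-- `M(k,n)`: maximum of `Mad(G_1)+…+Mad(G_k)` over all `k`-decompositions of `K_n`. -/
noncomputable def MSum (k n : ℕ) : ℝ :=
  sSup {s : ℝ | ∃ G : Fin k → SimpleGraph (Fin n), IsKDecomp G ∧ s = ∑ i, Mad (G i)}

/-- `M^L(k,N)`: maximum of `Mad(G_1)+…+Mad(G_k)` over all lists of `k` finite graphs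
with `N` edges in total. -/
noncomputable def MSumL (k N : ℕ) : ℝ :=
  sSup {s : ℝ | ∃ (V : Fin k → Type) (hV : ∀ i, Fintype (V i)) (G : ∀ i, SimpleGraph (V i)),
    (∑ i, @edgeCnt (V i) (hV i) (G i)) = N ∧ s = ∑ i, @Mad (V i) (hV i) (G i)}

/-- `g(m)`: maximum of `Mad(G)` over all finite simple graphs with exactly `m` edges. -/
noncomputable def gMax (m : ℕ) : ℝ :=
  sSup {d : ℝ | ∃ (V : Type) (hV : Fintype V) (G : SimpleGraph V),
    @edgeCnt V hV G = m ∧ d = @Mad V hV G}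

/-- The complete graph on the vertex subset `S` inside `Fin n`. -/
def cliqueOn {n : ℕ} (S : Finset (Fin n)) : SimpleGraph (Fin n) :=
  SimpleGraph.fromRel (fun a b => a ∈ S ∧ b ∈ S)

open Finset

/-!
Fix `p` and write the number of edges of a graph `G` as `C(p,2) + p a + x` with `a ∈ ℤ` and
`0 ≤ x < p`. A set of `j` vertices spans at most `min (C(j,2), e(G))` edges, so its average degree
is at most `j - 1` when `j ≤ p + a` and at most `2 e(G) / (p + a + 1)` otherwise; both are bounded
by `p - 1 + a + φ(x) / (p + 1)` with `φ(x) = max 0 (2x - p + 1)` (`surplus`). Up to the constant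
`p - 1` this bound is `stair p (e(G) - C(p,2)) / (p + 1)` for a superadditive function `stair`, so
over a list of `k` graphs with `k C(p,2) + q p + r` edges in total the sum of the `Mad`s is at most
`k (p - 1) + stair p (q p + r) / (p + 1) = k (p - 1) + q + φ(r) / (p + 1)`.
Equality holds for `q` copies of `K_{p+1}`, one `K_p` plus a vertex of degree `r`, and `k - q - 1`
copies of `K_p` plus an isolated vertex.
-/

def surplus (p x : ℤ) : ℤ := max 0 (2 * x - p + 1)

def stair (p y : ℤ) : ℤ := (p + 1) * (y / p) + surplus p (y % p)

lemma surplus_nonneg (p x : ℤ) : 0 ≤ surplus p x := le_max_left _ _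

lemma exists_eq_mul_add (y : ℤ) {p : ℤ} (hp : 0 < p) : ∃ a x, 0 ≤ x ∧ x < p ∧ y = p * a + x :=
  ⟨y / p, y % p, Int.emod_nonneg y hp.ne', Int.emod_lt_of_pos y hp,
    (Int.mul_ediv_add_emod y p).symm⟩

lemma stair_mul_add {p x : ℤ} (a : ℤ) (hx : 0 ≤ x) (hxp : x < p) :
    stair p (p * a + x) = (p + 1) * a + surplus p x := by
  obtain ⟨hdiv, hmod⟩ := (Int.ediv_emod_unique (a := p * a + x) (q := a) (r := x)
    (hx.trans_lt hxp)).mpr ⟨by ring, hx, hxp⟩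
  rw [stair, hdiv, hmod]

lemma stair_add_le {p : ℤ} (hp : 0 < p) (y z : ℤ) : stair p y + stair p z ≤ stair p (y + z) := by
  obtain ⟨a, x, hx, hxp, rfl⟩ := exists_eq_mul_add y hp
  obtain ⟨b, w, hw, hwp, rfl⟩ := exists_eq_mul_add z hp
  rw [stair_mul_add a hx hxp, stair_mul_add b hw hwp]
  rcases lt_or_ge (x + w) p with hlt | hge
  · rw [show p * a + x + (p * b + w) = p * (a + b) + (x + w) by ring,
      stair_mul_add _ (by omega) hlt]
    have : surplus p x + surplus p w ≤ surplus p (x + w) := by unfold surplus; omega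
    linarith
  · rw [show p * a + x + (p * b + w) = p * (a + b + 1) + (x + w - p) by ring,
      stair_mul_add _ (by omega) (by omega)]
    have : surplus p x + surplus p w ≤ p + 1 + surplus p (x + w - p) := by unfold surplus; omega
    linarith

lemma sum_stair_le {ι : Type*} {p : ℤ} (hp : 0 < p) (s : Finset ι) (y : ι → ℤ) :
    ∑ i ∈ s, stair p (y i) ≤ stair p (∑ i ∈ s, y i) := by
  classical
  induction s using Finset.induction_on with
  | empty => simp [stair, surplus]
  | insert i s hi ih =>
    rw [sum_insert hi, sum_insert hi]
    linarith [stair_add_le hp (y i) (∑ j ∈ s, y j)]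

-- `e` edges spanned by `j` vertices of a graph with `m = C(p,2) + y` edges
lemma two_mul_le_mul_stair {p j e m y : ℤ} (hp : 0 < p) (hj : 1 ≤ j) (he : 0 ≤ e)
    (hej : 2 * e ≤ j * (j - 1)) (hem : e ≤ m) (hy : 2 * m = p * (p - 1) + 2 * y) :
    2 * e * (p + 1) ≤ j * ((p + 1) * (p - 1) + stair p y) := by
  obtain ⟨a, x, hx, hxp, rfl⟩ := exists_eq_mul_add y hp
  rw [stair_mul_add a hx hxp, show (p + 1) * (p - 1) + ((p + 1) * a + surplus p x) =
    (p + 1) * (p + a - 1) + surplus p x by ring]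
  set s := surplus p x
  have hs : 0 ≤ s := surplus_nonneg p x
  rcases le_or_gt j (p + a) with hju | hju
  · have h1 : 2 * e * (p + 1) ≤ j * (j - 1) * (p + 1) := by nlinarith
    have h2 : j * (j - 1) ≤ j * (p + a - 1) := by nlinarith
    nlinarith
  · have hu : 1 ≤ p + a := by
      by_contra! hu
      have : p * a ≤ -p * p := by nlinarith
      nlinarith
    have key : 2 * m * (p + 1) ≤ (p + a + 1) * ((p + 1) * (p + a - 1) + s) := by
      have hgap : (p + a + 1) * ((p + 1) * (p + a - 1) + s) - 2 * m * (p + 1) =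
          (p + 1) * (a ^ 2 - (2 * x - p + 1)) + (p + a + 1) * s := by
        linear_combination (-(p + 1)) * hy
      rcases le_or_gt (2 * x - p + 1) 0 with hneg | hpos
      · nlinarith
      · have hs' : s = 2 * x - p + 1 := max_eq_right hpos.le
        have : 0 ≤ a * (2 * x - p + 1 + (p + 1) * a) := by
          rcases le_or_gt 0 a with ha | ha
          · exact mul_nonneg ha (by nlinarith)
          · exact mul_nonneg_of_nonpos_of_nonpos ha.le (by nlinarith)
        nlinarith
    have hB : 0 ≤ (p + 1) * (p + a - 1) + s := by nlinarith
    calc 2 * e * (p + 1) ≤ 2 * m * (p + 1) := by nlinarith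
      _ ≤ (p + a + 1) * ((p + 1) * (p + a - 1) + s) := key
      _ ≤ j * ((p + 1) * (p + a - 1) + s) := mul_le_mul_of_nonneg_right (by omega) hB

lemma two_mul_choose_two_eq (n : ℕ) : 2 * (n.choose 2 : ℤ) = n * (n - 1) := by
  have h : ((2 * (n.choose 2 : ℤ) : ℤ) : ℚ) = ((n * (n - 1) : ℤ) : ℚ) := by
    push_cast
    rw [Nat.cast_choose_two]
    ring
  exact_mod_cast h

lemma two_mul_div_le_stair {p j e m : ℕ} (hp : 0 < p) (hj : 0 < j) (hej : e ≤ j.choose 2)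
    (hem : e ≤ m) :
    2 * (e : ℝ) / j ≤ p - 1 + stair p (m - p.choose 2) / (p + 1) := by
  have h := two_mul_le_mul_stair (p := p) (j := j) (e := e) (m := m) (y := m - p.choose 2)
    (by exact_mod_cast hp) (by exact_mod_cast hj) (by positivity)
    (by rw [← two_mul_choose_two_eq]; exact_mod_cast Nat.mul_le_mul_left 2 hej)
    (by exact_mod_cast hem) (by rw [← two_mul_choose_two_eq]; ring)
  have hj' : (0 : ℝ) < j := by exact_mod_cast hj
  calc 2 * (e : ℝ) / j ≤ ((p + 1) * (p - 1) + stair p (m - p.choose 2)) / (p + 1) := by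
        rw [div_le_div_iff₀ hj' (by positivity)]
        exact_mod_cast (mul_comm (j : ℤ) _) ▸ h
    _ = p - 1 + stair p (m - p.choose 2) / (p + 1) := by
        field_simp

section Graph
variable {V : Type} [Fintype V] (G : SimpleGraph V)

lemma edgeCnt_eq_card_edgeFinset [DecidableRel G.Adj] : edgeCnt G = #G.edgeFinset := by
  rw [edgeCnt, ← SimpleGraph.coe_edgeFinset, Set.ncard_coe_finset]

lemma edgeCnt_le_choose_two : edgeCnt G ≤ (Fintype.card V).choose 2 := by
  classical
  exact (edgeCnt_eq_card_edgeFinset G).trans_le G.card_edgeFinset_le_card_choose_two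

lemma edgeCnt_top : edgeCnt (⊤ : SimpleGraph V) = (Fintype.card V).choose 2 := by
  classical
  rw [edgeCnt_eq_card_edgeFinset, SimpleGraph.card_edgeFinset_top_eq_card_choose_two]

lemma inducedEdgeCnt_eq_edgeCnt_induce (X : Finset V) :
    inducedEdgeCnt G X = edgeCnt (G.induce (X : Set V)) := by
  rw [inducedEdgeCnt, edgeCnt,
    ← Set.ncard_image_of_injective _ (Sym2.map.injective Subtype.val_injective)]
  congr 1
  ext e
  constructor
  · rintro ⟨he, hX⟩
    induction e with
    | h a b =>
      exact ⟨s(⟨a, hX a (Sym2.mem_mk_left a b)⟩, ⟨b, hX b (Sym2.mem_mk_right a b)⟩), he, rfl⟩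
  · rintro ⟨e, he, rfl⟩
    induction e with
    | h a b => exact ⟨he, by simp⟩

lemma inducedEdgeCnt_le_choose_two (X : Finset V) : inducedEdgeCnt G X ≤ (#X).choose 2 := by
  rw [inducedEdgeCnt_eq_edgeCnt_induce]
  simpa using edgeCnt_le_choose_two (G.induce (X : Set V))

lemma inducedEdgeCnt_of_isClique {X : Finset V} (hX : G.IsClique (X : Set V)) :
    inducedEdgeCnt G X = (#X).choose 2 := by
  rw [inducedEdgeCnt_eq_edgeCnt_induce, SimpleGraph.induce_eq_top.mpr hX, edgeCnt_top]
  simp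

lemma inducedEdgeCnt_le_edgeCnt (X : Finset V) : inducedEdgeCnt G X ≤ edgeCnt G :=
  Set.ncard_le_ncard (fun _ he => he.1) (Set.toFinite _)

lemma inducedEdgeCnt_univ : inducedEdgeCnt G univ = edgeCnt G := by
  simp [inducedEdgeCnt, edgeCnt]

lemma le_mad {X : Finset V} (hX : X.Nonempty) : 2 * (inducedEdgeCnt G X : ℝ) / #X ≤ Mad G := by
  refine le_csSup ?_ ⟨X, hX, rfl⟩
  refine ((Set.finite_range fun Y : Finset V => 2 * (inducedEdgeCnt G Y : ℝ) / #Y).subset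
    ?_).bddAbove
  rintro _ ⟨Y, -, rfl⟩
  exact ⟨Y, rfl⟩

lemma mad_le {B : ℝ} (hB : 0 ≤ B)
    (h : ∀ X : Finset V, X.Nonempty → 2 * (inducedEdgeCnt G X : ℝ) / #X ≤ B) : Mad G ≤ B :=
  Real.sSup_le (by rintro _ ⟨X, hX, rfl⟩; exact h X hX) hB

lemma mad_le_stair {p : ℕ} (hp : 0 < p) :
    Mad G ≤ p - 1 + stair p (edgeCnt G - p.choose 2) / (p + 1) := by
  refine mad_le G ?_ fun X hX => two_mul_div_le_stair hp hX.card_pos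
    (inducedEdgeCnt_le_choose_two G X) (inducedEdgeCnt_le_edgeCnt G X)
  simpa using two_mul_div_le_stair (e := 0) (m := edgeCnt G) hp one_pos (Nat.zero_le _)
    (Nat.zero_le _)

end Graph

lemma sum_mad_le {ι : Type*} [Fintype ι] (V : ι → Type) (hV : ∀ i, Fintype (V i))
    (G : ∀ i, SimpleGraph (V i)) {p q r : ℕ} (hp : 0 < p) (hr : r < p)
    (hsum : ∑ i, @edgeCnt _ (hV i) (G i) = Fintype.card ι * p.choose 2 + q * p + r) :
    ∑ i, @Mad _ (hV i) (G i) ≤ Fintype.card ι * ((p : ℝ) - 1) + q + surplus p r / (p + 1) := by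
  set y : ι → ℤ := fun i => @edgeCnt _ (hV i) (G i) - p.choose 2
  have hy : ∑ i, y i = p * q + r := by
    simp only [y, sum_sub_distrib, sum_const, card_univ, nsmul_eq_mul]
    rw [← Nat.cast_sum, hsum]
    push_cast
    ring
  calc ∑ i, @Mad _ (hV i) (G i) ≤ ∑ i, ((p : ℝ) - 1 + stair p (y i) / (p + 1)) :=
        sum_le_sum fun i _ => @mad_le_stair _ (hV i) (G i) p hp
    _ = Fintype.card ι * ((p : ℝ) - 1) + ((∑ i, stair p (y i) : ℤ) : ℝ) / (p + 1) := by
        rw [sum_add_distrib, ← sum_div]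
        simp only [sum_sub_distrib, sum_const, card_univ, nsmul_eq_mul, mul_one, Int.cast_sum,
          add_left_inj]
        ring
    _ ≤ Fintype.card ι * ((p : ℝ) - 1) + ((stair p (∑ i, y i) : ℤ) : ℝ) / (p + 1) := by
        gcongr
        exact_mod_cast sum_stair_le (by exact_mod_cast hp) univ y
    _ = Fintype.card ι * ((p : ℝ) - 1) + q + surplus p r / (p + 1) := by
        rw [hy, stair_mul_add _ (by positivity) (by exact_mod_cast hr)]
        push_cast
        field_simp
        ring

/-- `K_p` together with one more vertex joined to `x` of its vertices. -/
def cliquePlusVertex (p x : ℕ) : SimpleGraph (Fin (p + 1)) :=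
  (⊤ : SimpleGraph (Fin (p + 1))).deleteEdges
    ((fun j : Fin p => s(j.castSucc, Fin.last p)) '' {j | (j : ℕ) < p - x})

lemma edgeCnt_cliquePlusVertex {p x : ℕ} (hx : x ≤ p) :
    edgeCnt (cliquePlusVertex p x) = p.choose 2 + x := by
  classical
  have hsub : (fun j : Fin p => s(j.castSucc, Fin.last p)) '' {j | (j : ℕ) < p - x} ⊆
      (⊤ : SimpleGraph (Fin (p + 1))).edgeSet := by
    rintro _ ⟨j, -, rfl⟩
    exact (Fin.castSucc_lt_last j).ne
  have hinj : Function.Injective fun j : Fin p => s(j.castSucc, Fin.last p) := fun i j h =>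
    Fin.castSucc_injective p (Sym2.congr_left.mp h)
  have hcard : ({j | (j : ℕ) < p - x} : Set (Fin p)).ncard = p - x := by
    rw [Set.ncard_eq_toFinset_card', Set.toFinset_ofPred, Fin.card_filter_val_lt]
    omega
  rw [cliquePlusVertex, edgeCnt, SimpleGraph.edgeSet_deleteEdges,
    Set.ncard_sdiff hsub, Set.ncard_image_of_injective _ hinj, hcard, ← edgeCnt, edgeCnt_top,
    Fintype.card_fin, Nat.choose_two_right, Nat.triangle_succ, ← Nat.choose_two_right]
  omega

lemma le_mad_cliquePlusVertex {p x : ℕ} (hp : 0 < p) (hx : x ≤ p) :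
    (p : ℝ) - 1 + surplus p x / (p + 1) ≤ Mad (cliquePlusVertex p x) := by
  rcases le_total (2 * (x : ℤ) - p + 1) 0 with hneg | hpos
  · set X := univ.map (Fin.castSuccEmb : Fin p ↪ Fin (p + 1))
    have hX : (cliquePlusVertex p x).IsClique (X : Set (Fin (p + 1))) := by
      intro a ha b hb hab
      simp only [X, coe_map, coe_univ, Set.image_univ, Set.mem_range] at ha hb
      obtain ⟨a, rfl⟩ := ha
      obtain ⟨b, rfl⟩ := hb
      refine (SimpleGraph.deleteEdges_adj ..).mpr ⟨hab, ?_⟩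
      rintro ⟨j, -, hj⟩
      have hlast : Fin.last p ∈ s(a.castSucc, b.castSucc) := hj ▸ Sym2.mem_mk_right _ _
      rcases Sym2.mem_iff.mp hlast with h | h <;> exact (Fin.castSucc_lt_last _).ne h.symm
    have h := le_mad (cliquePlusVertex p x) (X := X) ((univ_nonempty_iff.mpr ⟨⟨0, hp⟩⟩).map)
    rw [inducedEdgeCnt_of_isClique _ hX] at h
    simp only [X, card_map, card_univ, Fintype.card_fin, Nat.cast_choose_two] at h
    rw [surplus, max_eq_left hneg, Int.cast_zero, zero_div, add_zero]
    calc (p : ℝ) - 1 = 2 * ((p : ℝ) * (p - 1) / 2) / p := by field_simp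
      _ ≤ _ := h
  · have h := le_mad (cliquePlusVertex p x) (X := univ) univ_nonempty
    rw [inducedEdgeCnt_univ, edgeCnt_cliquePlusVertex hx] at h
    simp only [card_univ, Fintype.card_fin] at h
    rw [surplus, max_eq_right hpos]
    push_cast at h ⊢
    rw [Nat.cast_choose_two] at h
    field_simp at h ⊢
    linarith

lemma sum_fin_ite_lt_ite_eq {M : Type*} [AddCommMonoid M] {k q : ℕ} (hq : q < k) {α : Type*}
    (f : α → M) (a b c : α) :
    ∑ i : Fin k, f (if (i : ℕ) < q then a else if (i : ℕ) = q then b else c) =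
      q • f a + f b + (k - q - 1) • f c := by
  obtain ⟨l, rfl⟩ : ∃ l, k = q + 1 + l := ⟨k - q - 1, by omega⟩
  simp_rw [apply_ite f]
  rw [Fin.sum_univ_eq_sum_range (fun n => if n < q then f a else if n = q then f b else f c),
    sum_range_add, sum_range_succ, sum_congr rfl fun n hn => if_pos (mem_range.1 hn),
    sum_congr rfl fun n _ => if_neg (by omega : ¬ q + 1 + n < q),
    sum_congr rfl fun n _ => if_neg (by omega : q + 1 + n ≠ q)]
  simp [show q + 1 + l - q - 1 = l by omega]

lemma exists_sum_mad_ge {k p q r : ℕ} (hp : 0 < p) (hq : q < k) (hr : r < p) :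
    ∃ G : Fin k → SimpleGraph (Fin (p + 1)),
      ∑ i, edgeCnt (G i) = k * p.choose 2 + q * p + r ∧
      k * ((p : ℝ) - 1) + q + surplus p r / (p + 1) ≤ ∑ i, Mad (G i) := by
  set x : Fin k → ℕ := fun i => if (i : ℕ) < q then p else if (i : ℕ) = q then r else 0
  have hx : ∀ i, x i ≤ p := fun i => by dsimp only [x]; split_ifs <;> omega
  refine ⟨fun i => cliquePlusVertex p (x i), ?_, ?_⟩
  · calc ∑ i, edgeCnt (cliquePlusVertex p (x i)) = ∑ i, (p.choose 2 + x i) :=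
          sum_congr rfl fun i _ => edgeCnt_cliquePlusVertex (hx i)
      _ = k * p.choose 2 + q * p + r := by
          rw [sum_add_distrib, show ∑ i, x i = _ from sum_fin_ite_lt_ite_eq hq id p r 0]
          simp only [sum_const, card_univ, Fintype.card_fin, smul_eq_mul, id_eq]
          ring
  · have hsum : ∑ i, surplus p (x i) = q * (p + 1) + surplus p r := by
      rw [show ∑ i, surplus p (x i) = _ from
        sum_fin_ite_lt_ite_eq hq (fun n : ℕ => surplus p n) p r 0]
      have hfull : surplus p p = p + 1 := by unfold surplus; omega
      have hnone : surplus p 0 = 0 := by unfold surplus; omega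
      rw [hfull, Nat.cast_zero, hnone]
      simp
    calc (k : ℝ) * (p - 1) + q + surplus p r / (p + 1) =
          ∑ i, ((p : ℝ) - 1 + surplus p (x i) / (p + 1)) := by
          rw [sum_add_distrib, ← sum_div, ← Int.cast_sum, hsum]
          simp only [sum_sub_distrib, sum_const, card_univ, Fintype.card_fin, nsmul_eq_mul,
            mul_one, Int.cast_add, Int.cast_mul, Int.cast_natCast, Int.cast_one]
          field_simp
          ring
      _ ≤ _ := sum_le_sum fun i _ => le_mad_cliquePlusVertex hp (hx i)

theorem madSumList_formula_general (N k p q r : ℕ) (hp : 2 ≤ p)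
    (hN : N = k * Nat.choose p 2 + q * p + r) (hq : q < k) (hr : r < p) :
    (2 * r + 1 ≤ p → MSumL k N = (k : ℝ) * p - k + q) ∧
    (p ≤ 2 * r + 1 →
      MSumL k N = (k : ℝ) * p - k + q + 1 - 2 * ((p : ℝ) - r) / ((p : ℝ) + 1)) := by
  have hp0 : 0 < p := by omega
  obtain ⟨G, hE, hM⟩ := exists_sum_mad_ge hp0 hq hr
  have hvalue : MSumL k N = k * ((p : ℝ) - 1) + q + surplus p r / (p + 1) := by
    refine IsGreatest.csSup_eq ⟨⟨fun _ => Fin (p + 1), fun _ => inferInstance, G,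
      hE.trans hN.symm, le_antisymm hM ?_⟩, ?_⟩
    · simpa using sum_mad_le _ _ G hp0 hr (by simpa using hE)
    · rintro _ ⟨V, hV, G', hsum, rfl⟩
      simpa using sum_mad_le V hV G' hp0 hr (by simpa [hN] using hsum)
  refine ⟨fun h => ?_, fun h => ?_⟩
  · rw [hvalue, surplus, max_eq_left (by omega)]
    push_cast
    ring
  · rw [hvalue, surplus, max_eq_right (by omega)]
    push_cast
    field_simp
    ring

/-- exact formula for the list extremal function `M^L(k,N)`. -/
theorem madSumList_formula (N k p q r : ℕ) (hk : 2 ≤ k) (hkN : k ≤ N) (hp : 2 ≤ p)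
    (h1 : k * Nat.choose p 2 ≤ N) (h2 : N < k * Nat.choose (p + 1) 2)
    (hN : N = k * Nat.choose p 2 + q * p + r) (hq : q < k) (hr : r < p) :
    (2 * r + 1 ≤ p → MSumL k N = (k : ℝ) * p - k + q) ∧
    (p ≤ 2 * r + 1 →
      MSumL k N = (k : ℝ) * p - k + q + 1 - 2 * ((p : ℝ) - r) / ((p : ℝ) + 1)) :=
  madSumList_formula_general N k p q r hp hN hq hr
end

section
/- If G is any simple graph of order n ≥ 3 and Ḡ is its complement, then Mad(G) + Mad(Ḡ) ≤ (5n² − 6n + 1)/(4n) if n is odd, and Mad(G) + Mad(Ḡ) ≤ (5n² − 6n)/(4n) if n is even. Moreover, both bounds are attained, so that M(2,n) = 5n/4 − 3/2 + ε_n for every n ≥ 3, where ε_n = 0 if n is even and ε_n = 1/(4n) if n is odd. -/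
/-!
For nonempty `X, Y` with `t = |X ∩ Y|`, the edges of `G` inside `X` and the edges of `Gᶜ` inside
`X ∩ Y` are disjoint pairs of `X`, and symmetrically for `Y`. As the `t(t-1)/2` pairs of `X ∩ Y`
are shared out between `G` and `Gᶜ`, this gives
`2e_G(X)/|X| + 2e_Gᶜ(Y)/|Y| ≤ |X| + |Y| - 2 - t(t-1)/n ≤ n - 2 + t(n+1-t)/n`,
and `t(n+1-t) ≤ ⌊(n+1)²/4⌋`. A clique on `⌊(n+1)/2⌋` vertices attains this bound, with `X` the
clique and `Y` the whole vertex set.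
-/

open Finset

section InducedEdges

variable {V : Type} [Fintype V]

lemma inducedEdgeCnt_mono (G : SimpleGraph V) {T X : Finset V} (hTX : T ⊆ X) :
    inducedEdgeCnt G T ≤ inducedEdgeCnt G X :=
  Set.ncard_le_ncard (fun _ ⟨he, hT⟩ ↦ ⟨he, fun v hv ↦ hTX (hT v hv)⟩) (Set.toFinite _)

lemma inducedEdgeCnt_eq_card_filter [DecidableEq V] (G : SimpleGraph V) [DecidableRel G.Adj]
    (X : Finset V) : inducedEdgeCnt G X = #{e ∈ X.sym2 | e ∈ G.edgeSet} := by
  rw [inducedEdgeCnt, ← Set.ncard_coe_finset]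
  congr 1
  ext e
  simp [mem_sym2_iff, and_comm]

lemma inducedEdgeCnt_add_compl (G : SimpleGraph V) (X : Finset V) :
    inducedEdgeCnt G X + inducedEdgeCnt Gᶜ X = (#X).choose 2 := by
  classical
  rw [inducedEdgeCnt_eq_card_filter, inducedEdgeCnt_eq_card_filter, ← Sym2.card_image_offDiag,
    ← Sym2.filter_image_mk_not_isDiag, ← sym2_eq_image,
    ← card_filter_add_card_filter_not (s := {e ∈ X.sym2 | ¬e.IsDiag}) (· ∈ G.edgeSet),
    filter_filter, filter_filter]
  congr 2 <;> ext e <;> induction e with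
  | _ a b => simp +contextual [SimpleGraph.compl_adj, G.ne_of_adj]

lemma inducedEdgeCnt_cliqueOn {n : ℕ} {S X : Finset (Fin n)} (hSX : S ⊆ X) :
    inducedEdgeCnt (cliqueOn S) X = (#S).choose 2 := by
  have hcompl : inducedEdgeCnt (cliqueOn S)ᶜ S = 0 := by
    rw [inducedEdgeCnt, Set.ncard_eq_zero (Set.toFinite _), Set.eq_empty_iff_forall_notMem]
    rintro e ⟨he, heS⟩
    induction e with
    | _ a b => simp_all [cliqueOn]
  have hS : inducedEdgeCnt (cliqueOn S) X = inducedEdgeCnt (cliqueOn S) S := by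
    have hin : ∀ e ∈ (cliqueOn S).edgeSet, ∀ v ∈ e, v ∈ S := by
      intro e he
      induction e with
      | _ a b => simp only [cliqueOn, SimpleGraph.mem_edgeSet, SimpleGraph.fromRel_adj] at he; aesop
    unfold inducedEdgeCnt
    congr 1
    ext e
    exact and_congr_right fun he ↦ iff_of_true (fun v hv ↦ hSX (hin e he v hv)) (hin e he)
  have := inducedEdgeCnt_add_compl (cliqueOn S) S
  omega

end InducedEdges

section AverageDegree

variable {V : Type} [Fintype V]

noncomputable def avgDegOn (G : SimpleGraph V) (X : Finset V) : ℝ :=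
  2 * (inducedEdgeCnt G X : ℝ) / (#X : ℝ)

lemma mad_eq_iSup (G : SimpleGraph V) :
    Mad G = ⨆ X : {X : Finset V // X.Nonempty}, avgDegOn G X := by
  rw [Mad, iSup]
  congr 1
  ext d
  simp [avgDegOn, eq_comm]

lemma avgDegOn_le_mad (G : SimpleGraph V) {X : Finset V} (hX : X.Nonempty) :
    avgDegOn G X ≤ Mad G := by
  rw [mad_eq_iSup]
  exact le_ciSup (Finite.bddAbove_range fun X : {X : Finset V // X.Nonempty} ↦ avgDegOn G X)
    ⟨X, hX⟩

lemma mad_add_mad_le [Nonempty V] (G H : SimpleGraph V) {B : ℝ}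
    (h : ∀ X Y : Finset V, X.Nonempty → Y.Nonempty → avgDegOn G X + avgDegOn H Y ≤ B) :
    Mad G + Mad H ≤ B := by
  have : Nonempty {X : Finset V // X.Nonempty} := ⟨⟨univ, univ_nonempty⟩⟩
  rw [mad_eq_iSup, mad_eq_iSup, ← le_sub_iff_add_le]
  refine ciSup_le fun X ↦ le_sub_comm.1 (ciSup_le fun Y ↦ ?_)
  linarith [h X Y X.2 Y.2]

lemma avgDegOn_le_of_subset (G : SimpleGraph V) {T X : Finset V} (hTX : T ⊆ X)
    (hX : X.Nonempty) :
    avgDegOn G X ≤ #X - 1 - 2 * inducedEdgeCnt Gᶜ T / Fintype.card V := by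
  have hcount : inducedEdgeCnt G X + inducedEdgeCnt Gᶜ T ≤ (#X).choose 2 :=
    inducedEdgeCnt_add_compl G X ▸ Nat.add_le_add_left (inducedEdgeCnt_mono Gᶜ hTX) _
  have hcountR : (inducedEdgeCnt G X : ℝ) + inducedEdgeCnt Gᶜ T ≤ #X * (#X - 1) / 2 := by
    rw [← Nat.cast_choose_two]
    exact_mod_cast hcount
  have hX0 : (0 : ℝ) < #X := by exact_mod_cast hX.card_pos
  have hXV : (#X : ℝ) ≤ Fintype.card V := by exact_mod_cast card_le_univ X
  calc avgDegOn G X ≤ (#X * (#X - 1) - 2 * inducedEdgeCnt Gᶜ T) / #X :=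
        div_le_div_of_nonneg_right (by linarith) hX0.le
    _ = #X - 1 - 2 * inducedEdgeCnt Gᶜ T / #X := by field_simp
    _ ≤ #X - 1 - 2 * inducedEdgeCnt Gᶜ T / Fintype.card V := by gcongr

lemma avgDegOn_add_avgDegOn_compl_le [DecidableEq V] (G : SimpleGraph V) {X Y : Finset V}
    (hX : X.Nonempty) (hY : Y.Nonempty) :
    avgDegOn G X + avgDegOn Gᶜ Y ≤
      Fintype.card V - 2 + #(X ∩ Y) * (Fintype.card V + 1 - #(X ∩ Y)) / Fintype.card V := by
  have hunion : #X + #Y ≤ Fintype.card V + #(X ∩ Y) := by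
    have := card_union_add_card_inter X Y
    have := card_le_univ (X ∪ Y)
    omega
  have hN : 0 < Fintype.card V := hX.card_pos.trans_le (card_le_univ X)
  set N := Fintype.card V
  set t := #(X ∩ Y)
  have hXY := avgDegOn_le_of_subset G (inter_subset_left (s₂ := Y)) hX
  have hYX := avgDegOn_le_of_subset Gᶜ (inter_subset_right (s₁ := X)) hY
  rw [compl_compl] at hYX
  have hpairs : (2 * inducedEdgeCnt G (X ∩ Y) + 2 * inducedEdgeCnt Gᶜ (X ∩ Y) : ℝ)
      = t * (t - 1) := by
    rw [← mul_add, ← Nat.cast_add, inducedEdgeCnt_add_compl, Nat.cast_choose_two]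
    ring
  have hunionR : (#X + #Y : ℝ) ≤ N + t := by exact_mod_cast hunion
  have hNR : (0 : ℝ) < N := by exact_mod_cast hN
  calc avgDegOn G X + avgDegOn Gᶜ Y ≤ #X + #Y - 2 - t * (t - 1) / N := by
        rw [← hpairs, add_div]; linarith
    _ ≤ N + t - 2 - t * (t - 1) / N := by linarith
    _ = N - 2 + t * (N + 1 - t) / N := by field_simp; ring

end AverageDegree

section Arithmetic

lemma mul_sub_le_sq_div_four (m t : ℕ) : (t : ℝ) * (m - t) ≤ (m ^ 2 / 4 : ℕ) := by
  obtain ⟨k, rfl | rfl⟩ := Nat.even_or_odd' m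
  · rw [show (2 * k) ^ 2 / 4 = k ^ 2 by rw [mul_pow]; omega]
    push_cast
    nlinarith [sq_nonneg ((t : ℝ) - k)]
  · rw [show (2 * k + 1) ^ 2 / 4 = k * (k + 1) by ring_nf; omega]
    have : ((t : ℝ) - k) * (t - (k + 1)) ≥ 0 := by
      rcases le_or_gt t k with h | h
      · have : (t : ℝ) ≤ k := by exact_mod_cast h
        nlinarith
      · have : (k : ℝ) + 1 ≤ t := by exact_mod_cast h
        nlinarith
    push_cast
    nlinarith

lemma div_two_mul_sub_div_two (m : ℕ) :
    ((m / 2 : ℕ) : ℝ) * (m - (m / 2 : ℕ)) = (m ^ 2 / 4 : ℕ) := by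
  obtain ⟨k, rfl | rfl⟩ := Nat.even_or_odd' m
  · rw [show (2 * k) ^ 2 / 4 = k ^ 2 by rw [mul_pow]; omega, show 2 * k / 2 = k by omega]
    push_cast
    ring
  · rw [show (2 * k + 1) ^ 2 / 4 = k * (k + 1) by ring_nf; omega,
      show (2 * k + 1) / 2 = k by omega]
    push_cast
    ring

/-- The value of `M(2, n)`: the natural-number division gives `⌊(n+1)²/4⌋ = max_t t(n+1-t)`. -/
noncomputable def nordhausGaddumBound (n : ℕ) : ℝ := n - 2 + ((n + 1) ^ 2 / 4 : ℕ) / n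

lemma nordhausGaddumBound_of_odd {n : ℕ} (h : Odd n) :
    nordhausGaddumBound n = 5 * (n : ℝ) / 4 - 3 / 2 + 1 / (4 * n) := by
  obtain ⟨k, rfl⟩ := h
  rw [nordhausGaddumBound, show (2 * k + 1 + 1) ^ 2 / 4 = (k + 1) ^ 2 by ring_nf; omega]
  push_cast
  field_simp
  ring

lemma nordhausGaddumBound_of_even {n : ℕ} (h : Even n) (hn : n ≠ 0) :
    nordhausGaddumBound n = 5 * (n : ℝ) / 4 - 3 / 2 := by
  obtain ⟨k, rfl⟩ := h
  have hk : (k : ℝ) ≠ 0 := by exact_mod_cast (by omega : k ≠ 0)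
  rw [nordhausGaddumBound, show (k + k + 1) ^ 2 / 4 = k * (k + 1) by ring_nf; omega]
  push_cast
  field_simp
  ring

end Arithmetic

theorem mad_add_mad_compl_le {V : Type} [Fintype V] [Nonempty V] (G : SimpleGraph V) :
    Mad G + Mad Gᶜ ≤ nordhausGaddumBound (Fintype.card V) := by
  classical
  refine mad_add_mad_le G Gᶜ fun X Y hX hY ↦ (avgDegOn_add_avgDegOn_compl_le G hX hY).trans ?_
  unfold nordhausGaddumBound
  gcongr
  exact_mod_cast mul_sub_le_sq_div_four (Fintype.card V + 1) #(X ∩ Y)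

lemma le_mad_cliqueOn_add_mad_compl {n : ℕ} {S : Finset (Fin n)} (hS : S.Nonempty) :
    n - 2 + #S * (n + 1 - #S) / n ≤ Mad (cliqueOn S) + Mad (cliqueOn S)ᶜ := by
  have : Nonempty (Fin n) := ⟨hS.choose⟩
  have hclique := avgDegOn_le_mad (cliqueOn S) hS
  have hcompl := avgDegOn_le_mad (cliqueOn S)ᶜ univ_nonempty
  have hcount := inducedEdgeCnt_add_compl (cliqueOn S) univ
  rw [inducedEdgeCnt_cliqueOn (subset_univ S), card_univ, Fintype.card_fin] at hcount
  have hcountR :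
      (inducedEdgeCnt (cliqueOn S)ᶜ univ : ℝ) = n * (n - 1) / 2 - #S * (#S - 1) / 2 := by
    rw [eq_sub_iff_add_eq', ← Nat.cast_choose_two, ← Nat.cast_choose_two]
    exact_mod_cast hcount
  have hn : (0 : ℝ) < n := by exact_mod_cast Fin.pos hS.choose
  have hs : (0 : ℝ) < #S := by exact_mod_cast hS.card_pos
  unfold avgDegOn at hclique hcompl
  rw [inducedEdgeCnt_cliqueOn subset_rfl, Nat.cast_choose_two] at hclique
  rw [hcountR, card_univ, Fintype.card_fin] at hcompl
  calc (n : ℝ) - 2 + #S * (n + 1 - #S) / n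
      = 2 * (#S * (#S - 1) / 2) / #S + 2 * (n * (n - 1) / 2 - #S * (#S - 1) / 2) / n := by
        field_simp
        ring
    _ ≤ Mad (cliqueOn S) + Mad (cliqueOn S)ᶜ := add_le_add hclique hcompl

lemma isKDecomp_two_iff {n : ℕ} {G : Fin 2 → SimpleGraph (Fin n)} :
    IsKDecomp G ↔ G 1 = (G 0)ᶜ := by
  have hunion : ⋃ i, (G i).edgeSet = (G 0 ⊔ G 1).edgeSet := by
    ext e
    simp [Fin.exists_fin_two]
  have hdisj : (∀ i j, i ≠ j → Disjoint (G i).edgeSet (G j).edgeSet) ↔ Disjoint (G 0) (G 1) := by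
    simp [Fin.forall_fin_two, disjoint_comm]
  rw [IsKDecomp, hunion, hdisj, SimpleGraph.edgeSet_inj, eq_compl_iff_isCompl, isCompl_iff,
    codisjoint_iff, disjoint_comm, sup_comm]

lemma mSum_two_eq_iSup (n : ℕ) : MSum 2 n = ⨆ H : SimpleGraph (Fin n), Mad H + Mad Hᶜ := by
  rw [MSum, iSup]
  congr 1
  ext s
  simp only [isKDecomp_two_iff, Fin.sum_univ_two, Set.mem_ofPred_eq, Set.mem_range]
  constructor
  · rintro ⟨G, hG, rfl⟩
    exact ⟨G 0, by rw [hG]⟩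
  · rintro ⟨H, rfl⟩
    exact ⟨![H, Hᶜ], rfl, rfl⟩

theorem mSum_two_eq {n : ℕ} (hn : 0 < n) : MSum 2 n = nordhausGaddumBound n := by
  have : Nonempty (Fin n) := ⟨⟨0, hn⟩⟩
  rw [mSum_two_eq_iSup]
  refine le_antisymm (ciSup_le fun H ↦ by simpa using mad_add_mad_compl_le H) ?_
  obtain ⟨S, -, hS⟩ := exists_subset_card_eq (s := (univ : Finset (Fin n))) (n := (n + 1) / 2)
    (by rw [card_univ, Fintype.card_fin]; omega)
  have hSne : S.Nonempty := card_pos.1 (by omega)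
  calc nordhausGaddumBound n = n - 2 + #S * (n + 1 - #S) / n := by
        rw [nordhausGaddumBound, hS, ← div_two_mul_sub_div_two]
        push_cast
        ring
    _ ≤ Mad (cliqueOn S) + Mad (cliqueOn S)ᶜ := le_mad_cliqueOn_add_mad_compl hSne
    _ ≤ ⨆ H : SimpleGraph (Fin n), Mad H + Mad Hᶜ :=
        le_ciSup (Finite.bddAbove_range fun H : SimpleGraph (Fin n) ↦ Mad H + Mad Hᶜ) _

/-- the Nordhaus--Gaddum bound for `Mad` with `k = 2`, and the
exact value of `M(2,n)`. -/
theorem madSum_two (n : ℕ) (hn : 3 ≤ n) :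
    (∀ (V : Type) [Fintype V], Fintype.card V = n → ∀ G : SimpleGraph V,
      (Odd n → Mad G + Mad Gᶜ ≤ (5 * (n : ℝ) ^ 2 - 6 * n + 1) / (4 * n)) ∧
      (Even n → Mad G + Mad Gᶜ ≤ (5 * (n : ℝ) ^ 2 - 6 * n) / (4 * n))) ∧
    (Odd n → MSum 2 n = 5 * (n : ℝ) / 4 - 3 / 2 + 1 / (4 * n)) ∧
    (Even n → MSum 2 n = 5 * (n : ℝ) / 4 - 3 / 2) := by
  have hn0 : (n : ℝ) ≠ 0 := by exact_mod_cast (by omega : n ≠ 0)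
  have hodd (h : Odd n) : nordhausGaddumBound n = (5 * (n : ℝ) ^ 2 - 6 * n + 1) / (4 * n) := by
    rw [nordhausGaddumBound_of_odd h]
    field_simp
    ring
  have heven (h : Even n) : nordhausGaddumBound n = (5 * (n : ℝ) ^ 2 - 6 * n) / (4 * n) := by
    rw [nordhausGaddumBound_of_even h (by omega)]
    field_simp
    ring
  refine ⟨fun V _ hV G ↦ ?_, fun h ↦ ?_, fun h ↦ ?_⟩
  · have : Nonempty V := Fintype.card_pos_iff.1 (by omega)
    have hbound := hV ▸ mad_add_mad_compl_le G
    exact ⟨fun h ↦ hodd h ▸ hbound, fun h ↦ heven h ▸ hbound⟩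
  · rw [mSum_two_eq (by omega), nordhausGaddumBound_of_odd h]
  · rw [mSum_two_eq (by omega), nordhausGaddumBound_of_even h (by omega)]
end

section
/- Let k ≥ 1 and n ≥ 2 be integers, and let x_1,…,x_k > 0 be real numbers with x_1+…+x_k = (n choose 2). For each j let y_j > 0 be the real number with y_j(y_j − 1)/2 = x_j. Then (y_1 − 1) + … + (y_k − 1) ≤ (√(k² + 4kn² − 4kn) − k)/2 < √k · n, and the first inequality is an equality when all x_j are equal to (n choose 2)/k. -/
/-!
With `u j = y j - 1` the constraint reads `u j ^ 2 + u j = 2 * x j`, so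
`∑ (u j ^ 2 + u j) = n ^ 2 - n`. Cauchy–Schwarz, `(∑ u j) ^ 2 ≤ k * ∑ u j ^ 2`, turns this into the
quadratic inequality `S ^ 2 + k * S ≤ k * (n ^ 2 - n)` for `S = ∑ u j`, whose positive root is the
bound. When all `x j` agree, so do the positive roots `y j`, Cauchy–Schwarz is an equality and so
is the quadratic inequality.
-/

open Finset

lemma le_quadratic_root_of_sq_add_mul_le {s a b : ℝ} (h : s ^ 2 + a * s ≤ b) :
    s ≤ (√(a ^ 2 + 4 * b) - a) / 2 := by
  have : |2 * s + a| ≤ √(a ^ 2 + 4 * b) := Real.abs_le_sqrt (by nlinarith)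
  linarith [le_abs_self (2 * s + a)]

lemma eq_quadratic_root_of_sq_add_mul_eq {s a b : ℝ} (h : s ^ 2 + a * s = b)
    (hs : 0 ≤ 2 * s + a) : s = (√(a ^ 2 + 4 * b) - a) / 2 := by
  have : √(a ^ 2 + 4 * b) = 2 * s + a := by
    rw [← Real.sqrt_sq hs, ← h]
    ring_nf
  linarith

lemma sq_sum_add_card_mul_sum_le {ι : Type*} (s : Finset ι) (u : ι → ℝ) :
    (∑ i ∈ s, u i) ^ 2 + #s * ∑ i ∈ s, u i ≤ #s * ∑ i ∈ s, (u i ^ 2 + u i) := by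
  rw [sum_add_distrib, mul_add]
  gcongr
  exact sq_sum_le_card_mul_sum_sq

lemma half_sqrt_sub_lt_sqrt_mul {k n : ℝ} (hk : 0 < k) (hn : 0 < n) :
    (√(k ^ 2 + 4 * k * n ^ 2 - 4 * k * n) - k) / 2 < √k * n := by
  have hsq : √k ^ 2 = k := Real.sq_sqrt hk.le
  have : √(k ^ 2 + 4 * k * n ^ 2 - 4 * k * n) < 2 * (√k * n) + k := by
    rw [Real.sqrt_lt' (by positivity)]
    nlinarith [mul_pos hk hn, mul_pos (mul_pos hk hn) (Real.sqrt_pos.2 hk)]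
  linarith

lemma one_le_of_mul_sub_one_nonneg {y : ℝ} (hy : 0 < y) (h : 0 ≤ y * (y - 1)) : 1 ≤ y :=
  sub_nonneg.1 (nonneg_of_mul_nonneg_right h hy)

lemma eq_of_mul_sub_one_eq {y z c : ℝ} (hc : 0 ≤ c) (hy : 0 < y) (hz : 0 < z)
    (hyc : y * (y - 1) = c) (hzc : z * (z - 1) = c) : y = z := by
  have hy1 := one_le_of_mul_sub_one_nonneg hy (hyc ▸ hc)
  have hz1 := one_le_of_mul_sub_one_nonneg hz (hzc ▸ hc)
  have : (y - z) * (y + z - 1) = 0 := by linear_combination hyc - hzc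
  rcases mul_eq_zero.1 this with h | h <;> linarith

theorem convex_relaxation_general (k n : ℕ) (hk : 1 ≤ k) (hn : 2 ≤ n) (x y : Fin k → ℝ)
    (hsum : ∑ j, x j = (Nat.choose n 2 : ℝ))
    (hy : ∀ j, 0 < y j ∧ y j * (y j - 1) / 2 = x j) :
    (∑ j, (y j - 1)) ≤
      (Real.sqrt ((k : ℝ) ^ 2 + 4 * k * n ^ 2 - 4 * k * n) - k) / 2 ∧
    (Real.sqrt ((k : ℝ) ^ 2 + 4 * k * n ^ 2 - 4 * k * n) - k) / 2 <
      Real.sqrt (k : ℝ) * n ∧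
    ((∀ j, x j = (Nat.choose n 2 : ℝ) / k) →
      (∑ j, (y j - 1)) =
        (Real.sqrt ((k : ℝ) ^ 2 + 4 * k * n ^ 2 - 4 * k * n) - k) / 2) := by
  have hroot (j : Fin k) : (y j - 1) ^ 2 + (y j - 1) = 2 * x j := by
    linear_combination 2 * (hy j).2
  have hD : (k : ℝ) ^ 2 + 4 * k * n ^ 2 - 4 * k * n =
      k ^ 2 + 4 * (k * ∑ j, ((y j - 1) ^ 2 + (y j - 1))) := by
    rw [sum_congr rfl fun j _ ↦ hroot j, ← mul_sum, hsum, Nat.cast_choose_two]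
    ring
  refine ⟨?_, half_sqrt_sub_lt_sqrt_mul (by positivity) (by positivity), fun hconst ↦ ?_⟩
  · rw [hD]
    apply le_quadratic_root_of_sq_add_mul_le
    simpa using sq_sum_add_card_mul_sum_le univ fun j ↦ y j - 1
  · let j₀ : Fin k := ⟨0, hk⟩
    have hc : (0 : ℝ) ≤ 2 * ((Nat.choose n 2 : ℝ) / k) := by positivity
    have hyc (j : Fin k) : y j * (y j - 1) = 2 * ((Nat.choose n 2 : ℝ) / k) := by
      linarith [(hy j).2, hconst j]
    have hyconst (j : Fin k) : y j = y j₀ :=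
      eq_of_mul_sub_one_eq hc (hy j).1 (hy j₀).1 (hyc j) (hyc j₀)
    have hy₀ : 1 ≤ y j₀ := one_le_of_mul_sub_one_nonneg (hy j₀).1 (hyc j₀ ▸ hc)
    rw [hD, show y = fun _ ↦ y j₀ from funext hyconst]
    simp only [sum_const, card_univ, Fintype.card_fin, nsmul_eq_mul]
    apply eq_quadratic_root_of_sq_add_mul_eq (by ring)
    nlinarith

/-- continuous relaxation bound (Lemma on convexity). -/
theorem convex_relaxation (k n : ℕ) (hk : 1 ≤ k) (hn : 2 ≤ n) (x y : Fin k → ℝ)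
    (hx : ∀ j, 0 < x j) (hsum : ∑ j, x j = (Nat.choose n 2 : ℝ))
    (hy : ∀ j, 0 < y j ∧ y j * (y j - 1) / 2 = x j) :
    (∑ j, (y j - 1)) ≤
      (Real.sqrt ((k : ℝ) ^ 2 + 4 * k * n ^ 2 - 4 * k * n) - k) / 2 ∧
    (Real.sqrt ((k : ℝ) ^ 2 + 4 * k * n ^ 2 - 4 * k * n) - k) / 2 <
      Real.sqrt (k : ℝ) * n ∧
    ((∀ j, x j = (Nat.choose n 2 : ℝ) / k) →
      (∑ j, (y j - 1)) =
        (Real.sqrt ((k : ℝ) ^ 2 + 4 * k * n ^ 2 - 4 * k * n) - k) / 2) :=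
  convex_relaxation_general k n hk hn x y hsum hy
end

section
/- For every integer m ≥ 1, g(m) ≤ y − 1, where y = (1 + √(8m+1))/2 is the positive real number satisfying y(y−1)/2 = m. Equivalently, every finite simple graph with m edges has Mad(G) ≤ (√(8m+1) − 1)/2. -/
lemma arith_bound (m e x : ℕ) (hx : 1 ≤ x) (he1 : e ≤ m) (he2 : 2 * e ≤ x * (x - 1)) :
    2 * (e : ℝ) / (x : ℝ) ≤ (Real.sqrt (8 * (m : ℝ) + 1) - 1) / 2 := by
  set s := Real.sqrt (8 * (m : ℝ) + 1) with hs
  have hs2 : s ^ 2 = 8 * (m : ℝ) + 1 := Real.sq_sqrt (by positivity)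
  have hs0 : 0 ≤ s := Real.sqrt_nonneg _
  have hm0 : (0 : ℝ) ≤ m := Nat.cast_nonneg m
  have hs1 : 1 ≤ s := by nlinarith
  have hxpos : (0 : ℝ) < x := by exact_mod_cast hx
  have he2' : 2 * (e : ℝ) ≤ (x : ℝ) * ((x : ℝ) - 1) := by
    have := (Nat.cast_le (α := ℝ)).2 he2
    push_cast [Nat.cast_sub hx] at this
    linarith
  have he1' : (e : ℝ) ≤ (m : ℝ) := by exact_mod_cast he1
  rw [div_le_div_iff₀ hxpos (by norm_num : (0:ℝ) < 2)]
  rcases le_or_gt (x : ℝ) ((s + 1) / 2) with h | h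
  · nlinarith
  · nlinarith

lemma induced_le_choose {V : Type} [Fintype V] (G : SimpleGraph V) (X : Finset V) :
    inducedEdgeCnt G X ≤ X.card.choose 2 := by
  classical
  have hsub : {e : Sym2 V | e ∈ G.edgeSet ∧ ∀ v ∈ e, v ∈ X} ⊆
      (Sym2.map (Subtype.val : {v // v ∈ X} → V)) '' ((⊤ : SimpleGraph {v // v ∈ X}).edgeSet) := by
    rintro e ⟨heG, hX⟩
    induction e with
    | h a b =>
      have hab : G.Adj a b := heG
      have ha : a ∈ X := hX a (by simp)
      have hb : b ∈ X := hX b (by simp)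
      refine ⟨s(⟨a, ha⟩, ⟨b, hb⟩), ?_, by simp⟩
      simp only [SimpleGraph.mem_edgeSet, SimpleGraph.top_adj]
      intro hcontra
      exact hab.ne (congrArg Subtype.val hcontra)
  have h1 : inducedEdgeCnt G X ≤
      ((Sym2.map (Subtype.val : {v // v ∈ X} → V)) '' ((⊤ : SimpleGraph {v // v ∈ X}).edgeSet)).ncard :=
    Set.ncard_le_ncard hsub (Set.toFinite _)
  have h2 : ((Sym2.map (Subtype.val : {v // v ∈ X} → V)) '' ((⊤ : SimpleGraph {v // v ∈ X}).edgeSet)).ncard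
      ≤ ((⊤ : SimpleGraph {v // v ∈ X}).edgeSet).ncard :=
    Set.ncard_image_le (Set.toFinite _)
  have h3 : ((⊤ : SimpleGraph {v // v ∈ X}).edgeSet).ncard ≤ X.card.choose 2 := by
    rw [Set.ncard_eq_toFinset_card']
    have := SimpleGraph.card_edgeFinset_le_card_choose_two (G := (⊤ : SimpleGraph {v // v ∈ X}))
    rwa [SimpleGraph.edgeFinset, Fintype.card_coe] at this
  exact le_trans h1 (le_trans h2 h3)

lemma mad_le_sqrt {V : Type} [Fintype V] (G : SimpleGraph V) (m : ℕ) (hm : 1 ≤ m)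
    (hG : edgeCnt G = m) :
    Mad G ≤ (Real.sqrt (8 * (m : ℝ) + 1) - 1) / 2 := by
  have hb0 : (0 : ℝ) ≤ (Real.sqrt (8 * (m : ℝ) + 1) - 1) / 2 := by
    have h1 := Real.sq_sqrt (show (0:ℝ) ≤ 8 * (m : ℝ) + 1 by positivity)
    have h2 := Real.sqrt_nonneg (8 * (m : ℝ) + 1)
    have h3 : (0:ℝ) ≤ m := Nat.cast_nonneg m
    nlinarith
  apply Real.sSup_le _ hb0
  rintro d ⟨X, hX, rfl⟩
  have hx : 1 ≤ X.card := Finset.card_pos.mpr hX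
  have he1 : inducedEdgeCnt G X ≤ m := by
    rw [← hG]
    exact Set.ncard_le_ncard (fun e he => he.1) (Set.toFinite _)
  have he2 : 2 * inducedEdgeCnt G X ≤ X.card * (X.card - 1) := by
    have h := induced_le_choose G X
    have hch : X.card.choose 2 * 2 = X.card * (X.card - 1) := by
      rw [Nat.choose_two_right]
      rcases Nat.even_mul_succ_self (X.card - 1) with ⟨c, hc⟩
      rw [Nat.sub_add_cancel hx, mul_comm] at hc
      omega
    omega
  have := arith_bound m (inducedEdgeCnt G X) X.card hx he1 he2
  linarith

/-- `g(m) ≤ (√(8m+1) - 1)/2`, i.e. every graph with `m` edges has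
`Mad(G) ≤ (√(8m+1) - 1)/2`. -/
theorem gMax_le_sqrt (m : ℕ) (hm : 1 ≤ m) :
    gMax m ≤ (Real.sqrt (8 * (m : ℝ) + 1) - 1) / 2 ∧
    ∀ (V : Type) [Fintype V] (G : SimpleGraph V), edgeCnt G = m →
      Mad G ≤ (Real.sqrt (8 * (m : ℝ) + 1) - 1) / 2 := by
  constructor
  · have hb0 : (0 : ℝ) ≤ (Real.sqrt (8 * (m : ℝ) + 1) - 1) / 2 := by
      have h1 := Real.sq_sqrt (show (0:ℝ) ≤ 8 * (m : ℝ) + 1 by positivity)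
      have h2 := Real.sqrt_nonneg (8 * (m : ℝ) + 1)
      have h3 : (0:ℝ) ≤ m := Nat.cast_nonneg m
      nlinarith
    apply Real.sSup_le _ hb0
    rintro d ⟨V, hV, G, hGm, rfl⟩
    exact @mad_le_sqrt V hV G m hm hGm
  · intro V _ G hGm
    exact mad_le_sqrt G m hm hGm
end

section
/- Let v > r > 2 be integers and suppose a Steiner system S(2,r,v) exists, i.e., the edge set of K_v can be partitioned into k = v(v−1)/(r(r−1)) copies of K_r. If n is a positive integer divisible by v, then M(k,n) ≥ (v/r)·(n−1). -/
open Finset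

section Mad

variable {V : Type} [Fintype V] (G : SimpleGraph V)

lemma inducedEdgeCnt_eq_edgeCnt {X : Finset V} (hX : ∀ x y, G.Adj x y → x ∈ X) :
    inducedEdgeCnt G X = edgeCnt G := by
  refine congrArg Set.ncard (Set.sep_eq_self_iff_mem_true.mpr fun e he => ?_)
  induction e using Sym2.ind with
  | h x y =>
    intro z hz
    rcases Sym2.mem_iff.mp hz with rfl | rfl
    exacts [hX _ _ he, hX _ _ he.symm]

lemma two_mul_inducedEdgeCnt_div_card_le (X : Finset V) :
    2 * (inducedEdgeCnt G X : ℝ) / X.card ≤ 2 * edgeCnt G := by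
  rcases X.eq_empty_or_nonempty with rfl | hX
  · simp
  have hcard : (1 : ℝ) ≤ X.card := by exact_mod_cast hX.card_pos
  calc 2 * (inducedEdgeCnt G X : ℝ) / X.card ≤ 2 * inducedEdgeCnt G X :=
        div_le_self (by positivity) hcard
    _ ≤ 2 * edgeCnt G := by gcongr; exact inducedEdgeCnt_le_edgeCnt G X

lemma Mad_le : Mad G ≤ 2 * edgeCnt G :=
  Real.sSup_le (by rintro _ ⟨X, -, rfl⟩; exact two_mul_inducedEdgeCnt_div_card_le G X)
    (by positivity)

lemma two_mul_edgeCnt_div_card_le_Mad {X : Finset V} (hX : X.Nonempty)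
    (hsupp : ∀ x y, G.Adj x y → x ∈ X) : 2 * (edgeCnt G : ℝ) / X.card ≤ Mad G :=
  inducedEdgeCnt_eq_edgeCnt G hsupp ▸
    le_csSup ⟨_, by rintro _ ⟨Y, -, rfl⟩; exact two_mul_inducedEdgeCnt_div_card_le G Y⟩
      ⟨X, hX, rfl⟩

end Mad

section Decomposition

variable {k n : ℕ}

lemma isKDecomp_iff {G : Fin k → SimpleGraph (Fin n)} :
    IsKDecomp G ↔ ∀ x y, x ≠ y → ∃! i, (G i).Adj x y := by
  simp only [IsKDecomp, Set.disjoint_left, Set.ext_iff, Set.mem_iUnion, Sym2.forall,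
    SimpleGraph.mem_edgeSet, SimpleGraph.top_adj]
  constructor
  · rintro ⟨hdisj, hcover⟩ x y hxy
    obtain ⟨i, hi⟩ := (hcover x y).mpr hxy
    exact ⟨i, hi, fun j hj => by_contra fun hji => hdisj j i hji x y hj hi⟩
  · intro h
    refine ⟨fun i j hij x y hi hj => hij ((h x y hi.ne).unique hi hj), fun x y => ?_⟩
    exact ⟨fun ⟨i, hi⟩ => hi.ne, fun hxy => (h x y hxy).exists⟩

lemma edgeCnt_top_s16 : edgeCnt (⊤ : SimpleGraph (Fin n)) = n.choose 2 := by
  rw [edgeCnt, Set.ncard_eq_toFinset_card', ← SimpleGraph.edgeFinset,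
    SimpleGraph.card_edgeFinset_top_eq_card_choose_two, Fintype.card_fin]

lemma IsKDecomp.sum_edgeCnt {G : Fin k → SimpleGraph (Fin n)} (hG : IsKDecomp G) :
    ∑ i, edgeCnt (G i) = n.choose 2 := by
  rw [← edgeCnt_top_s16, edgeCnt, ← hG.2, Set.ncard_iUnion_of_finite (fun _ => Set.toFinite _)
    (fun i j hij => hG.1 i j hij), finsum_eq_sum_of_fintype]
  rfl

lemma IsKDecomp.sum_Mad_le_MSum {G : Fin k → SimpleGraph (Fin n)} (hG : IsKDecomp G) :
    ∑ i, Mad (G i) ≤ MSum k n := by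
  refine le_csSup ⟨2 * n.choose 2, ?_⟩ ⟨G, hG, rfl⟩
  rintro _ ⟨H, hH, rfl⟩
  calc ∑ i, Mad (H i) ≤ ∑ i, 2 * (edgeCnt (H i) : ℝ) := sum_le_sum fun i _ => Mad_le (H i)
    _ = 2 * n.choose 2 := by rw [← mul_sum, ← hH.sum_edgeCnt]; push_cast; rfl

lemma IsKDecomp.le_MSum_of_supported {G : Fin k → SimpleGraph (Fin n)} (hG : IsKDecomp G)
    {s : ℕ} (hs : 0 < s) (X : Fin k → Finset (Fin n)) (hX : ∀ i, (X i).card = s)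
    (hsupp : ∀ i x y, (G i).Adj x y → x ∈ X i) :
    (n : ℝ) * (n - 1) / s ≤ MSum k n :=
  calc (n : ℝ) * (n - 1) / s = ∑ i, 2 * (edgeCnt (G i) : ℝ) / s := by
        rw [← sum_div, ← mul_sum, ← Nat.cast_sum, hG.sum_edgeCnt, Nat.cast_choose_two]
        ring
    _ ≤ ∑ i, Mad (G i) := sum_le_sum fun i _ => hX i ▸
        two_mul_edgeCnt_div_card_le_Mad (G i) (card_pos.mp (hX i ▸ hs)) (hsupp i)
    _ ≤ MSum k n := hG.sum_Mad_le_MSum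

def blowup {ι V W : Type*} (G : ι → SimpleGraph W) (φ : V → W) (c : W → ι) (i : ι) :
    SimpleGraph V :=
  (G i).comap φ ⊔ SimpleGraph.fromRel fun x y => φ x = φ y ∧ c (φ x) = i

lemma blowup_adj {ι V W : Type*} {G : ι → SimpleGraph W} {φ : V → W} {c : W → ι} {i : ι}
    {x y : V} :
    (blowup G φ c i).Adj x y ↔ (G i).Adj (φ x) (φ y) ∨ x ≠ y ∧ φ x = φ y ∧ c (φ x) = i := by
  simp only [blowup, SimpleGraph.sup_adj, SimpleGraph.comap_adj, SimpleGraph.fromRel_adj]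
  constructor
  · rintro (h | ⟨hxy, h | ⟨h, rfl⟩⟩)
    exacts [.inl h, .inr ⟨hxy, h⟩, .inr ⟨hxy, h.symm, by rw [h]⟩]
  · rintro (h | ⟨hxy, h⟩)
    exacts [.inl h, .inr ⟨hxy, .inl h⟩]

lemma IsKDecomp.blowup {v : ℕ} {G : Fin k → SimpleGraph (Fin v)} (hG : IsKDecomp G)
    (φ : Fin n → Fin v) (c : Fin v → Fin k) : IsKDecomp (blowup G φ c) := by
  rw [isKDecomp_iff] at hG ⊢
  intro x y hxy
  simp only [blowup_adj]
  by_cases hφ : φ x = φ y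
  · refine ⟨c (φ x), .inr ⟨hxy, hφ, rfl⟩, fun j hj => ?_⟩
    rcases hj with hj | ⟨-, -, hj⟩
    exacts [absurd hφ hj.ne, hj.symm]
  · obtain ⟨i, hi, huniq⟩ := hG (φ x) (φ y) hφ
    refine ⟨i, .inl hi, fun j hj => ?_⟩
    rcases hj with hj | ⟨-, hj, -⟩
    exacts [huniq j hj, absurd hj hφ]

lemma cliqueOn_adj {v : ℕ} {S : Finset (Fin v)} {a b : Fin v} :
    (cliqueOn S).Adj a b ↔ a ≠ b ∧ a ∈ S ∧ b ∈ S := by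
  simp only [cliqueOn, SimpleGraph.fromRel_adj]
  tauto

lemma IsKDecomp.exists_mem_of_cliqueOn {v : ℕ} {S : Fin k → Finset (Fin v)}
    (hS : IsKDecomp fun i => cliqueOn (S i)) (hv : 1 < v) (a : Fin v) : ∃ i, a ∈ S i := by
  obtain ⟨b, hb⟩ := Fintype.exists_ne_of_one_lt_card (by simpa using hv) a
  obtain ⟨i, hi, -⟩ := isKDecomp_iff.mp hS a b hb.symm
  exact ⟨i, (cliqueOn_adj.mp hi).2.1⟩

lemma blowup_cliqueOn_adj_mem {V : Type*} {v : ℕ} {S : Fin k → Finset (Fin v)}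
    {φ : V → Fin v} {c : Fin v → Fin k} (hc : ∀ a, a ∈ S (c a)) {i : Fin k} {x y : V}
    (h : (blowup (fun i => cliqueOn (S i)) φ c i).Adj x y) : φ x ∈ S i := by
  rcases blowup_adj.mp h with h | ⟨-, -, rfl⟩
  exacts [(cliqueOn_adj.mp h).2.1, hc _]

lemma card_filter_divNat_mem {v m : ℕ} (T : Finset (Fin v)) :
    #{x : Fin (v * m) | x.divNat ∈ T} = #T * m := by
  calc #{x : Fin (v * m) | x.divNat ∈ T} = #((T ×ˢ univ).map finProdFinEquiv.toEmbedding) :=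
        congrArg card (ext fun x => by simp [mem_map_equiv])
    _ = #T * m := by simp

end Decomposition

/-- blow-up of a Steiner system `S(2,r,v)` gives a lower bound
for `M(k,n)` when `v ∣ n`. -/
theorem madSum_blowup_steiner (v r n : ℕ) (hr : 2 < r) (hv : r < v)
    (hS : ∃ S : Fin (v * (v - 1) / (r * (r - 1))) → Finset (Fin v),
      IsKDecomp (fun i => cliqueOn (S i)) ∧ ∀ i, (S i).card = r)
    (hn : 0 < n) (hdvd : v ∣ n) :
    MSum (v * (v - 1) / (r * (r - 1))) n ≥ ((v : ℝ) / (r : ℝ)) * ((n : ℝ) - 1) := by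
  obtain ⟨S, hS, hcard⟩ := hS
  obtain ⟨m, rfl⟩ := hdvd
  have hm : 0 < m := Nat.pos_of_mul_pos_left hn
  choose c hc using hS.exists_mem_of_cliqueOn (by omega)
  have key := (hS.blowup Fin.divNat c).le_MSum_of_supported (s := r * m) (by positivity)
    (fun i => {x | x.divNat ∈ S i}) (fun i => by rw [card_filter_divNat_mem, hcard])
    (fun i x y h => by simpa using blowup_cliqueOn_adj_mem hc h)
  calc ((v : ℝ) / r) * ((v * m : ℕ) - 1) = (v * m : ℕ) * ((v * m : ℕ) - 1) / (r * m : ℕ) := by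
        push_cast
        field_simp
    _ ≤ _ := key
end
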